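/- arXiv:1310.5798 — 3 statements merged into one kernel-verified Lean document; each statement's English description precedes it below -/
import Mathlib

section
/- Let H ∈ (1/2,1) and c_H > 0, and let K be the fBm Volterra kernel K(t,s) = c_H · s^{1/2−H} · ∫_s^t (u−s)^{H−3/2} u^{H−1/2} du for 0 < s ≤ t. Then there exists a constant C > 0, depending only on H and c_H, such that for every t ∈ (0,1], every integer n ≥ 1, and all 0 ≤ v < τ ≤ t satisfying ∫_v^τ K(t,u)² du = t^{2H}/n, one has τ − v ≤ C · t · n^{−1/(2H)}. -/
open Real MeasureTheory intervalIntegral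

/-- The fBm Volterra kernel for Hurst parameter `H > 1/2`:
`K(t,s) = c_H · s^{1/2-H} · ∫_s^t (u-s)^{H-3/2} u^{H-1/2} du`. -/
noncomputable def fbmKernel (cH H t s : ℝ) : ℝ :=
  cH * s ^ ((1 : ℝ) / 2 - H) * ∫ u in s..t, (u - s) ^ (H - 3 / 2) * u ^ (H - 1 / 2)

/-- Superadditivity of `x ^ p` for `p ≥ 1`. -/
lemma rpow_superadd {a b p : ℝ} (hb : 0 ≤ b) (hba : b ≤ a) (hp : 1 ≤ p) :
    b ^ p + (a - b) ^ p ≤ a ^ p := by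
  have h := NNReal.add_rpow_le_rpow_add (b.toNNReal) ((a - b).toNNReal) hp
  have h2 : ((b.toNNReal : ℝ)) ^ p + (((a - b).toNNReal : ℝ)) ^ p
      ≤ (((b.toNNReal + (a - b).toNNReal : NNReal) : ℝ)) ^ p := by
    exact_mod_cast h
  rw [NNReal.coe_add, Real.coe_toNNReal _ hb, Real.coe_toNNReal _ (by linarith),
    show b + (a - b) = a by ring] at h2
  exact h2

/-- The shifted rpow is interval integrable. -/
lemma intInt_shift_rpow {r : ℝ} (hr : -1 < r) (s t : ℝ) :
    IntervalIntegrable (fun w => (w - s) ^ r) volume s t := by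
  have := (intervalIntegral.intervalIntegrable_rpow' hr (a := 0) (b := t - s)).comp_sub_right s
  simpa using this

lemma integral_shift_rpow {r : ℝ} (hr : -1 < r) (s t : ℝ) :
    ∫ w in s..t, (w - s) ^ r = (t - s) ^ (r + 1) / (r + 1) := by
  rw [intervalIntegral.integral_comp_sub_right (fun x => x ^ r) s]
  simp only [sub_self]
  rw [integral_rpow (Or.inl hr)]
  rw [Real.zero_rpow (by linarith)]
  ring

/-- Lower bound on the fBm kernel. -/
lemma fbmKernel_lower (H cH : ℝ) (hH1 : 1 / 2 < H) (hH2 : H < 1) (hcH : 0 < cH)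
    (t s : ℝ) (hs : 0 < s) (hst : s ≤ t) :
    cH / (H - 1 / 2) * (t - s) ^ (H - 1 / 2) ≤ fbmKernel cH H t s := by
  have hp : (0 : ℝ) < H - 1 / 2 := by linarith
  rcases eq_or_lt_of_le hst with rfl | hlt
  · rw [sub_self, Real.zero_rpow (ne_of_gt hp), mul_zero]
    simp [fbmKernel]
  have hr : (-1 : ℝ) < H - 3 / 2 := by linarith
  -- integrand comparison on Ioc s t
  have hg_int : IntervalIntegrable (fun w => (w - s) ^ (H - 3 / 2) * s ^ (H - 1 / 2))
      volume s t := (intInt_shift_rpow hr s t).mul_const _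
  have hf_int : IntervalIntegrable (fun w => (w - s) ^ (H - 3 / 2) * w ^ (H - 1 / 2))
      volume s t := by
    rw [intervalIntegrable_iff_integrableOn_Ioc_of_le hst]
    have hmeas : AEStronglyMeasurable (fun w => (w - s) ^ (H - 3 / 2) * w ^ (H - 1 / 2))
        (volume.restrict (Set.Ioc s t)) := by
      apply Measurable.aestronglyMeasurable
      fun_prop
    refine Integrable.mono' (g := fun w => (w - s) ^ (H - 3 / 2) * t ^ (H - 1 / 2)) ?_ hmeas ?_
    · exact ((intInt_shift_rpow hr s t).mul_const _).1
    · filter_upwards [ae_restrict_mem measurableSet_Ioc] with w hw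
      have hw1 : s < w := hw.1
      have hws : 0 ≤ w - s := by linarith
      rw [Real.norm_eq_abs, abs_mul, abs_of_nonneg (Real.rpow_nonneg hws _),
        abs_of_nonneg (Real.rpow_nonneg (by linarith : (0:ℝ) ≤ w) _)]
      exact mul_le_mul_of_nonneg_left
        (Real.rpow_le_rpow (by linarith) hw.2 (by linarith)) (Real.rpow_nonneg hws _)
  have hmono : ∫ w in s..t, (w - s) ^ (H - 3 / 2) * s ^ (H - 1 / 2)
      ≤ ∫ w in s..t, (w - s) ^ (H - 3 / 2) * w ^ (H - 1 / 2) := by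
    rw [intervalIntegral.integral_of_le hst, intervalIntegral.integral_of_le hst]
    refine setIntegral_mono_on ((intervalIntegrable_iff_integrableOn_Ioc_of_le hst).1 hg_int)
      ((intervalIntegrable_iff_integrableOn_Ioc_of_le hst).1 hf_int) measurableSet_Ioc ?_
    intro w hw
    exact mul_le_mul_of_nonneg_left
      (Real.rpow_le_rpow hs.le hw.1.le (by linarith)) (Real.rpow_nonneg (by linarith [hw.1]) _)
  have hval : ∫ w in s..t, (w - s) ^ (H - 3 / 2) * s ^ (H - 1 / 2)
      = (t - s) ^ (H - 1 / 2) / (H - 1 / 2) * s ^ (H - 1 / 2) := by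
    rw [intervalIntegral.integral_mul_const, integral_shift_rpow hr,
      show H - 3 / 2 + 1 = H - 1 / 2 by ring]
  have hsum : s ^ ((1 : ℝ) / 2 - H) * s ^ (H - 1 / 2) = 1 := by
    rw [← Real.rpow_add hs]
    norm_num
  have hle : (t - s) ^ (H - 1 / 2) / (H - 1 / 2) * s ^ (H - 1 / 2)
      ≤ ∫ w in s..t, (w - s) ^ (H - 3 / 2) * w ^ (H - 1 / 2) := hval ▸ hmono
  have hspow : 0 < s ^ ((1 : ℝ) / 2 - H) := Real.rpow_pos_of_pos hs _
  calc cH / (H - 1 / 2) * (t - s) ^ (H - 1 / 2)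
      = cH / (H - 1 / 2) * (t - s) ^ (H - 1 / 2) * (s ^ ((1:ℝ) / 2 - H) * s ^ (H - 1 / 2)) := by
        rw [hsum, mul_one]
    _ = cH * s ^ ((1 : ℝ) / 2 - H) * ((t - s) ^ (H - 1 / 2) / (H - 1 / 2) * s ^ (H - 1 / 2)) := by
        ring
    _ ≤ fbmKernel cH H t s := by
        unfold fbmKernel
        exact mul_le_mul_of_nonneg_left hle (by positivity)

/-- If `∫_v^τ K(t,u)² du = t^{2H}/n` then `τ - v ≤ C t n^{-1/(2H)}`, with `C`
depending only on `H` and `c_H`. -/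
theorem partition_mesh_bound (H cH : ℝ) (hH1 : 1 / 2 < H) (hH2 : H < 1) (hcH : 0 < cH) :
    ∃ C : ℝ, 0 < C ∧
      ∀ t : ℝ, 0 < t → t ≤ 1 → ∀ n : ℕ, 1 ≤ n → ∀ v τ : ℝ, 0 ≤ v → v < τ → τ ≤ t →
        (∫ u in v..τ, (fbmKernel cH H t u) ^ 2) = t ^ (2 * H) / n →
        τ - v ≤ C * t * (n : ℝ) ^ (-(1 / (2 * H))) := by
  have hp : (0 : ℝ) < H - 1 / 2 := by linarith
  set c : ℝ := cH / (H - 1 / 2) with hc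
  have hcpos : 0 < c := div_pos hcH hp
  have h2H : (0 : ℝ) < 2 * H := by linarith
  refine ⟨(2 * H / c ^ 2) ^ (1 / (2 * H)), Real.rpow_pos_of_pos (by positivity) _, ?_⟩
  intro t ht ht1 n hn v τ hv hvτ hτt hint
  have hnpos : (0 : ℝ) < n := by exact_mod_cast hn
  have hrhs_pos : (0 : ℝ) < t ^ (2 * H) / n := by positivity
  -- integrability of K² on [v, τ]
  have hK2 : IntervalIntegrable (fun u => (fbmKernel cH H t u) ^ 2) volume v τ := by
    by_contra hcon
    rw [intervalIntegral.integral_undef hcon] at hint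
    linarith
  -- pointwise lower bound on Ioc v τ
  have hpt : ∀ u ∈ Set.Ioc v τ, c ^ 2 * (t - u) ^ (2 * H - 1) ≤ (fbmKernel cH H t u) ^ 2 := by
    intro u hu
    have hu0 : 0 < u := lt_of_le_of_lt hv hu.1
    have hut : u ≤ t := le_trans hu.2 hτt
    have h1 := fbmKernel_lower H cH hH1 hH2 hcH t u hu0 hut
    have hnn : 0 ≤ c * (t - u) ^ (H - 1 / 2) :=
      mul_nonneg hcpos.le (Real.rpow_nonneg (by linarith) _)
    have h2 : (c * (t - u) ^ (H - 1 / 2)) ^ 2 ≤ (fbmKernel cH H t u) ^ 2 := by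
      apply sq_le_sq' <;> nlinarith
    have hsq : ((t - u) ^ (H - 1 / 2)) ^ 2 = (t - u) ^ (2 * H - 1) := by
      rw [← Real.rpow_natCast ((t - u) ^ (H - 1 / 2)) 2,
        ← Real.rpow_mul (by linarith : (0:ℝ) ≤ t - u),
        show (H - 1 / 2) * ((2:ℕ):ℝ) = 2 * H - 1 by push_cast; ring]
    calc c ^ 2 * (t - u) ^ (2 * H - 1) = (c * (t - u) ^ (H - 1 / 2)) ^ 2 := by
          rw [mul_pow, hsq]
      _ ≤ _ := h2
  -- integrability of lower bound
  have hg_int : IntervalIntegrable (fun u => c ^ 2 * (t - u) ^ (2 * H - 1)) volume v τ := by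
    have := ((intervalIntegral.intervalIntegrable_rpow' (show (-1:ℝ) < 2 * H - 1 by linarith)
      (a := t - v) (b := t - τ)).comp_sub_left t).const_mul (c ^ 2)
    simpa using this
  -- integral comparison
  have hmono : ∫ u in v..τ, c ^ 2 * (t - u) ^ (2 * H - 1)
      ≤ ∫ u in v..τ, (fbmKernel cH H t u) ^ 2 := by
    rw [intervalIntegral.integral_of_le hvτ.le, intervalIntegral.integral_of_le hvτ.le]
    exact setIntegral_mono_on
      ((intervalIntegrable_iff_integrableOn_Ioc_of_le hvτ.le).1 hg_int)
      ((intervalIntegrable_iff_integrableOn_Ioc_of_le hvτ.le).1 hK2) measurableSet_Ioc hpt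
  -- compute the lower integral
  have hval : ∫ u in v..τ, c ^ 2 * (t - u) ^ (2 * H - 1)
      = c ^ 2 * (((t - v) ^ (2 * H) - (t - τ) ^ (2 * H)) / (2 * H)) := by
    rw [intervalIntegral.integral_const_mul,
      intervalIntegral.integral_comp_sub_left (fun x => x ^ (2 * H - 1)) t,
      integral_rpow (Or.inl (by linarith))]
    norm_num
  -- superadditivity
  have hsup : (τ - v) ^ (2 * H) ≤ (t - v) ^ (2 * H) - (t - τ) ^ (2 * H) := by
    have := rpow_superadd (a := t - v) (b := t - τ) (p := 2 * H)
      (by linarith) (by linarith) (by linarith)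
    have heq : t - v - (t - τ) = τ - v := by ring
    rw [heq] at this
    linarith
  -- combine: (τ - v)^(2H) ≤ (2H / c²) * t^(2H) / n
  have hkey : (τ - v) ^ (2 * H) ≤ (2 * H / c ^ 2) * (t ^ (2 * H) / n) := by
    have h1 : c ^ 2 * ((τ - v) ^ (2 * H) / (2 * H)) ≤ t ^ (2 * H) / n := by
      rw [← hint]
      calc c ^ 2 * ((τ - v) ^ (2 * H) / (2 * H))
          ≤ c ^ 2 * (((t - v) ^ (2 * H) - (t - τ) ^ (2 * H)) / (2 * H)) := by
            gcongr
        _ = ∫ u in v..τ, c ^ 2 * (t - u) ^ (2 * H - 1) := hval.symm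
        _ ≤ _ := hmono
    have h2 := mul_le_mul_of_nonneg_left h1 (le_of_lt (show (0:ℝ) < 2 * H / c ^ 2 by positivity))
    calc (τ - v) ^ (2 * H)
        = (2 * H / c ^ 2) * (c ^ 2 * ((τ - v) ^ (2 * H) / (2 * H))) := by
          field_simp
      _ ≤ (2 * H / c ^ 2) * (t ^ (2 * H) / n) := h2
  -- conclude by taking the (1/(2H))-th power
  have hA : (0:ℝ) < τ - v := by linarith
  have hfin : τ - v = ((τ - v) ^ (2 * H)) ^ (1 / (2 * H)) := by
    rw [← Real.rpow_mul hA.le, mul_one_div, div_self (ne_of_gt h2H), Real.rpow_one]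
  rw [hfin]
  have hmon := Real.rpow_le_rpow (Real.rpow_nonneg hA.le _) hkey
    (by positivity : (0:ℝ) ≤ 1 / (2 * H))
  refine hmon.trans_eq ?_
  rw [Real.mul_rpow (by positivity) (by positivity),
    div_eq_mul_inv (t ^ (2 * H)) (n : ℝ),
    Real.mul_rpow (by positivity) (by positivity),
    ← Real.rpow_mul ht.le, mul_one_div, div_self (ne_of_gt h2H), Real.rpow_one,
    Real.inv_rpow (by positivity), ← Real.rpow_neg (by positivity)]
  ring
end

section
/- Let H ∈ (0,1), let k, p ≥ 1 be integers, let 0 < γ < H satisfy 2pk(H−γ) > 2k − 1, let 0 ≤ s < t ≤ 1, let C > 0, and let X be a jointly measurable stochastic process on [s,t] with values in ℝ^d such that E[|X_v − X_u|^{2pk}] ≤ C·|v−u|^{2Hpk} for all u, v ∈ [s,t]. Then there exists a constant c, depending only on C, k, p, γ, H, such that E[ ( N_{γ,p}(X) )^k ] ≤ c · (t−s)^{2kp(H−γ)}, where N_{γ,p}(X) = ∫_s^t ∫_s^t |X_v − X_u|^{2p} / |v−u|^{2γp+2} du dv. -/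
open Real MeasureTheory ENNReal

/-! By Hölder's inequality on `[s,t]²`, `N_{γ,p}(X)^k` is at most `(t-s)^{2(k-1)}` times the
integral of the `k`-th power of the integrand. Taking expectations and swapping them with the
`du dv` integral (Tonelli), the moment hypothesis bounds the expected integrand by `C |v-u|^β` with
`β = 2pk(H-γ) - 2k`. The condition `2pk(H-γ) > 2k-1` says exactly `β > -1`, so that `|v-u|^β` is
integrable on `[s,t]²`, with integral at most `2 (t-s)^{β+2}/(β+1)`. -/

theorem ENNReal.lintegral_pow_le_measure_univ_pow_mul {α : Type*} [MeasurableSpace α]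
    {μ : Measure α} {f : α → ℝ≥0∞} (hf : AEMeasurable f μ) {k : ℕ} (hk : 1 ≤ k) :
    (∫⁻ a, f a ∂μ) ^ k ≤ μ Set.univ ^ (k - 1) * ∫⁻ a, f a ^ k ∂μ := by
  have hk0 : (k : ℝ) ≠ 0 := by positivity
  have hinv : 1 / (k : ℝ) ≤ 1 := by rw [div_le_one (by positivity)]; exact_mod_cast hk
  have holder : ∫⁻ a, f a ∂μ ≤
      (∫⁻ a, f a ^ k ∂μ) ^ (1 / (k : ℝ)) * μ Set.univ ^ (1 - 1 / (k : ℝ)) := by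
    have h := ENNReal.lintegral_mul_norm_pow_le (μ := μ) (f := fun a => f a ^ k)
      (g := fun _ => 1) (p := 1 / k) (q := 1 - 1 / k) (hf.pow_const k) aemeasurable_const
      (by positivity) (by linarith) (add_sub_cancel _ _)
    simpa only [← ENNReal.rpow_natCast (f _), ← ENNReal.rpow_mul, mul_one_div_cancel hk0,
      ENNReal.rpow_one, ENNReal.one_rpow, mul_one, lintegral_one] using h
  calc (∫⁻ a, f a ∂μ) ^ k
      ≤ ((∫⁻ a, f a ^ k ∂μ) ^ (1 / (k : ℝ)) * μ Set.univ ^ (1 - 1 / (k : ℝ))) ^ (k : ℝ) := by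
        rw [ENNReal.rpow_natCast]; gcongr
    _ = μ Set.univ ^ (k - 1) * ∫⁻ a, f a ^ k ∂μ := by
        rw [ENNReal.mul_rpow_of_nonneg _ _ (by positivity), ← ENNReal.rpow_mul, ← ENNReal.rpow_mul,
          one_div_mul_cancel hk0, ENNReal.rpow_one, sub_mul, one_div_mul_cancel hk0, one_mul,
          ← Nat.cast_one, ← Nat.cast_sub hk, ENNReal.rpow_natCast, mul_comm]

theorem lintegral_pow_lintegral_le {α Ω : Type*} [MeasurableSpace α] [MeasurableSpace Ω]
    {P : Measure Ω} [SFinite P] {ν : Measure α} [SFinite ν] {F : α → Ω → ℝ≥0∞}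
    (hF : Measurable (Function.uncurry F)) {k : ℕ} (hk : 1 ≤ k) :
    ∫⁻ ω, (∫⁻ z, F z ω ∂ν) ^ k ∂P ≤ ν Set.univ ^ (k - 1) * ∫⁻ z, ∫⁻ ω, F z ω ^ k ∂P ∂ν := by
  have hFk : Measurable fun q : Ω × α => F q.2 q.1 ^ k := (hF.comp measurable_swap).pow_const k
  calc ∫⁻ ω, (∫⁻ z, F z ω ∂ν) ^ k ∂P
      ≤ ∫⁻ ω, ν Set.univ ^ (k - 1) * ∫⁻ z, F z ω ^ k ∂ν ∂P :=
        lintegral_mono fun ω => ENNReal.lintegral_pow_le_measure_univ_pow_mul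
          (hF.comp (measurable_id.prodMk measurable_const)).aemeasurable hk
    _ = ν Set.univ ^ (k - 1) * ∫⁻ ω, ∫⁻ z, F z ω ^ k ∂ν ∂P :=
        lintegral_const_mul _ hFk.lintegral_prod_right'
    _ = ν Set.univ ^ (k - 1) * ∫⁻ z, ∫⁻ ω, F z ω ^ k ∂P ∂ν := by
        rw [lintegral_lintegral_swap hFk.aemeasurable]

theorem setLIntegral_Icc_ofReal_eq_intervalIntegral {f : ℝ → ℝ} {a b : ℝ} (hab : a ≤ b)
    (hf : IntervalIntegrable f volume a b) (hf0 : ∀ x ∈ Set.Icc a b, 0 ≤ f x) :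
    ∫⁻ x in Set.Icc a b, ENNReal.ofReal (f x) = ENNReal.ofReal (∫ x in a..b, f x) := by
  rw [intervalIntegral.integral_of_le hab, ← integral_Icc_eq_integral_Ioc,
    ofReal_integral_eq_lintegral_ofReal ((intervalIntegrable_iff_integrableOn_Icc_of_le hab).1 hf)
      ((ae_restrict_iff' measurableSet_Icc).2 (ae_of_all _ hf0))]

section RpowIntegrals

variable {β a b : ℝ}

theorem integral_rpow_zero_left (hβ : -1 < β) (r : ℝ) :
    ∫ x in (0 : ℝ)..r, x ^ β = r ^ (β + 1) / (β + 1) := by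
  rw [integral_rpow (Or.inl hβ), Real.zero_rpow (by linarith), sub_zero]

theorem setLIntegral_Icc_rpow_sub_right (hβ : -1 < β) (hab : a ≤ b) :
    ∫⁻ v in Set.Icc a b, ENNReal.ofReal ((v - a) ^ β) =
      ENNReal.ofReal ((b - a) ^ (β + 1) / (β + 1)) := by
  rw [setLIntegral_Icc_ofReal_eq_intervalIntegral hab
      (by simpa using
        (intervalIntegral.intervalIntegrable_rpow' (a := 0) (b := b - a) hβ).comp_sub_right a)
      fun v hv => Real.rpow_nonneg (sub_nonneg.2 hv.1) β,
    intervalIntegral.integral_comp_sub_right (· ^ β), sub_self, integral_rpow_zero_left hβ]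

theorem setLIntegral_Icc_rpow_sub_left (hβ : -1 < β) (hab : a ≤ b) :
    ∫⁻ v in Set.Icc a b, ENNReal.ofReal ((b - v) ^ β) =
      ENNReal.ofReal ((b - a) ^ (β + 1) / (β + 1)) := by
  rw [setLIntegral_Icc_ofReal_eq_intervalIntegral hab
      (by simpa using
        (intervalIntegral.intervalIntegrable_rpow' (a := b - a) (b := 0) hβ).comp_sub_left b)
      fun v hv => Real.rpow_nonneg (sub_nonneg.2 hv.2) β,
    intervalIntegral.integral_comp_sub_left (· ^ β), sub_self, integral_rpow_zero_left hβ]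

theorem setLIntegral_Icc_abs_sub_rpow_le (hβ : -1 < β) {u : ℝ} (hu : u ∈ Set.Icc a b) :
    ∫⁻ v in Set.Icc a b, ENNReal.ofReal (|v - u| ^ β) ≤
      ENNReal.ofReal (2 * ((b - a) ^ (β + 1) / (β + 1))) := by
  have hβ1 : 0 < β + 1 := by linarith
  have hmono : ∀ {x y}, a ≤ x → x ≤ y → y ≤ b →
      ENNReal.ofReal ((y - x) ^ (β + 1) / (β + 1)) ≤
        ENNReal.ofReal ((b - a) ^ (β + 1) / (β + 1)) := fun _ _ _ => by gcongr
  calc ∫⁻ v in Set.Icc a b, ENNReal.ofReal (|v - u| ^ β)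
      ≤ (∫⁻ v in Set.Icc a u, ENNReal.ofReal (|v - u| ^ β)) +
          ∫⁻ v in Set.Icc u b, ENNReal.ofReal (|v - u| ^ β) :=
        (lintegral_mono_set (Set.Icc_subset_Icc_union_Icc)).trans (lintegral_union_le _ _ _)
    _ = ENNReal.ofReal ((u - a) ^ (β + 1) / (β + 1)) +
          ENNReal.ofReal ((b - u) ^ (β + 1) / (β + 1)) := by
        rw [← setLIntegral_Icc_rpow_sub_left hβ hu.1, ← setLIntegral_Icc_rpow_sub_right hβ hu.2]
        congr 1 <;> refine setLIntegral_congr_fun measurableSet_Icc fun v hv => ?_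
        · rw [abs_sub_comm, abs_of_nonneg (sub_nonneg.2 hv.2)]
        · rw [abs_of_nonneg (sub_nonneg.2 hv.1)]
    _ ≤ ENNReal.ofReal (2 * ((b - a) ^ (β + 1) / (β + 1))) := by
        have h0 : 0 ≤ (b - a) ^ (β + 1) / (β + 1) :=
          div_nonneg (Real.rpow_nonneg (by linarith [hu.1, hu.2]) _) hβ1.le
        rw [two_mul, ENNReal.ofReal_add h0 h0]
        exact add_le_add (hmono le_rfl hu.1 hu.2) (hmono hu.1 hu.2 le_rfl)

theorem lintegral_prod_Icc_abs_sub_rpow_le (hβ : -1 < β) (hab : a ≤ b) :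
    ∫⁻ z, ENNReal.ofReal (|z.2 - z.1| ^ β)
        ∂(volume.restrict (Set.Icc a b)).prod (volume.restrict (Set.Icc a b)) ≤
      ENNReal.ofReal (2 * ((b - a) ^ (β + 1) / (β + 1)) * (b - a)) := by
  rw [lintegral_prod _ (by fun_prop)]
  calc ∫⁻ u in Set.Icc a b, ∫⁻ v in Set.Icc a b, ENNReal.ofReal (|v - u| ^ β)
      ≤ ∫⁻ _ in Set.Icc a b, ENNReal.ofReal (2 * ((b - a) ^ (β + 1) / (β + 1))) :=
        setLIntegral_mono' measurableSet_Icc fun u hu => setLIntegral_Icc_abs_sub_rpow_le hβ hu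
    _ = _ := by
        rw [setLIntegral_const, Real.volume_Icc, ← ENNReal.ofReal_mul (mul_nonneg zero_le_two
          (div_nonneg (Real.rpow_nonneg (sub_nonneg.2 hab) _) (by linarith)))]

end RpowIntegrals

theorem lintegral_ofReal_norm_sub_div_rpow_pow_le {Ω E : Type*} [MeasurableSpace Ω]
    [SeminormedAddCommGroup E] {P : Measure Ω} {X : ℝ → Ω → E} {p k : ℕ} (hp : 1 ≤ p)
    (hk : 1 ≤ k) {u v a e M : ℝ}
    (hmom : ∫⁻ ω, ENNReal.ofReal (‖X v ω - X u ω‖ ^ (2 * p * k)) ∂P ≤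
      ENNReal.ofReal (M * |v - u| ^ a)) :
    ∫⁻ ω, ENNReal.ofReal (‖X v ω - X u ω‖ ^ (2 * p) / |v - u| ^ e) ^ k ∂P ≤
      ENNReal.ofReal (M * |v - u| ^ (a - e * k)) := by
  rcases eq_or_ne v u with rfl | huv
  · simp [zero_pow (by omega : 2 * p ≠ 0), zero_pow (by omega : k ≠ 0)]
  have hr : 0 < |v - u| := abs_pos.2 (sub_ne_zero.2 huv)
  have hinv : 0 ≤ (|v - u| ^ (e * k))⁻¹ := by positivity
  have hpow : ∀ ω, ENNReal.ofReal (‖X v ω - X u ω‖ ^ (2 * p) / |v - u| ^ e) ^ k =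
      ENNReal.ofReal (‖X v ω - X u ω‖ ^ (2 * p * k)) * ENNReal.ofReal (|v - u| ^ (e * k))⁻¹ := by
    intro ω
    rw [← ENNReal.ofReal_pow (by positivity), div_pow, ← pow_mul, ← Real.rpow_mul_natCast hr.le,
      div_eq_mul_inv, ENNReal.ofReal_mul (by positivity)]
  calc ∫⁻ ω, ENNReal.ofReal (‖X v ω - X u ω‖ ^ (2 * p) / |v - u| ^ e) ^ k ∂P
      = (∫⁻ ω, ENNReal.ofReal (‖X v ω - X u ω‖ ^ (2 * p * k)) ∂P) *
          ENNReal.ofReal (|v - u| ^ (e * k))⁻¹ := by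
        simp_rw [hpow]; exact lintegral_mul_const' _ _ ENNReal.ofReal_ne_top
    _ ≤ ENNReal.ofReal (M * |v - u| ^ a) * ENNReal.ofReal (|v - u| ^ (e * k))⁻¹ := by gcongr
    _ = ENNReal.ofReal (M * |v - u| ^ (a - e * k)) := by
        rw [← ENNReal.ofReal_mul' hinv, mul_assoc, ← div_eq_mul_inv, ← Real.rpow_sub hr]

theorem moment_bound_GRR_functional_general
    (H : ℝ) (k p : ℕ) (hk : 1 ≤ k) (hp : 1 ≤ p)
    (γ : ℝ)
    (hcond : 2 * (p : ℝ) * k * (H - γ) > 2 * (k : ℝ) - 1)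
    (C : ℝ) (hC : 0 < C) :
    ∃ c : ℝ, 0 < c ∧
      ∀ (Ω : Type) [MeasureSpace Ω], IsProbabilityMeasure (volume : Measure Ω) →
        ∀ (d : ℕ) (s t : ℝ), 0 ≤ s → s < t → t ≤ 1 →
          ∀ X : ℝ → Ω → EuclideanSpace ℝ (Fin d),
            Measurable (Function.uncurry X) →
            (∀ u ∈ Set.Icc s t, ∀ v ∈ Set.Icc s t,
              (∫⁻ ω, ENNReal.ofReal (‖X v ω - X u ω‖ ^ (2 * p * k))) ≤
                ENNReal.ofReal (C * |v - u| ^ (2 * H * p * k))) →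
            (∫⁻ ω, (∫⁻ u in Set.Icc s t, ∫⁻ v in Set.Icc s t,
                ENNReal.ofReal (‖X v ω - X u ω‖ ^ (2 * p) / |v - u| ^ (2 * γ * p + 2))) ^ k)
              ≤ ENNReal.ofReal (c * (t - s) ^ (2 * (k : ℝ) * p * (H - γ))) := by
  set β : ℝ := 2 * H * p * k - (2 * γ * p + 2) * k
  have hβ : 0 < β + 1 := by linarith
  refine ⟨C * (2 / (β + 1)), by positivity, ?_⟩
  intro Ω _ _ d s t _ hst _ X hX hmom
  let ν := (volume.restrict (Set.Icc s t)).prod (volume.restrict (Set.Icc s t))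
  let F : ℝ × ℝ → Ω → ℝ≥0∞ := fun z ω =>
    ENNReal.ofReal (‖X z.2 ω - X z.1 ω‖ ^ (2 * p) / |z.2 - z.1| ^ (2 * γ * p + 2))
  have hF : Measurable (Function.uncurry F) := by fun_prop
  have hν : ν Set.univ = ENNReal.ofReal (t - s) * ENNReal.ofReal (t - s) := by
    rw [← Set.univ_prod_univ, Measure.prod_prod]; simp [Real.volume_Icc]
  have hFω : ∀ ω, Measurable fun z => F z ω := fun ω => by fun_prop
  calc _ = ∫⁻ ω, (∫⁻ z, F z ω ∂ν) ^ k := lintegral_congr fun ω => by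
        rw [lintegral_prod _ (hFω ω).aemeasurable]
    _ ≤ ν Set.univ ^ (k - 1) * ∫⁻ z, (∫⁻ ω, F z ω ^ k) ∂ν := lintegral_pow_lintegral_le hF hk
    _ ≤ ν Set.univ ^ (k - 1) * ∫⁻ z, ENNReal.ofReal C * ENNReal.ofReal (|z.2 - z.1| ^ β) ∂ν := by
        gcongr ν Set.univ ^ (k - 1) * ?_
        rw [show ν = _ from Measure.prod_restrict _ _]
        refine setLIntegral_mono' (measurableSet_Icc.prod measurableSet_Icc) fun z hz => ?_
        rw [← ENNReal.ofReal_mul hC.le]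
        exact lintegral_ofReal_norm_sub_div_rpow_pow_le hp hk (hmom _ hz.1 _ hz.2)
    _ ≤ (ENNReal.ofReal (t - s) * ENNReal.ofReal (t - s)) ^ (k - 1) *
          (ENNReal.ofReal C * ENNReal.ofReal (2 * ((t - s) ^ (β + 1) / (β + 1)) * (t - s))) := by
        rw [lintegral_const_mul _ (by fun_prop), hν]
        gcongr
        exact lintegral_prod_Icc_abs_sub_rpow_le (by linarith) hst.le
    _ = _ := by
        have hT : 0 < t - s := sub_pos.2 hst
        have hexp : 2 * (k : ℝ) * p * (H - γ) = ((2 * (k - 1) : ℕ) : ℝ) + (β + 1) + 1 := by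
          push_cast [β, Nat.cast_sub hk]; ring
        rw [← ENNReal.ofReal_mul hT.le, ← ENNReal.ofReal_pow (by positivity),
          ← ENNReal.ofReal_mul hC.le, ← ENNReal.ofReal_mul (by positivity), hexp]
        simp only [Real.rpow_add hT, Real.rpow_natCast, Real.rpow_one, pow_mul]
        congr 1
        field_simp

/-- Moment bound for the Garsia–Rodemich–Rumsey functional
`N_{γ,p}(X) = ∫∫ |X_v - X_u|^{2p}/|v-u|^{2γp+2} du dv` of a process whose increments satisfy
`E[|X_v - X_u|^{2pk}] ≤ C |v-u|^{2Hpk}`: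
one has `E[(N_{γ,p}(X))^k] ≤ c (t-s)^{2kp(H-γ)}` with `c` depending only on `C,k,p,γ,H`. -/
theorem moment_bound_GRR_functional
    (H : ℝ) (hH1 : 0 < H) (hH2 : H < 1) (k p : ℕ) (hk : 1 ≤ k) (hp : 1 ≤ p)
    (γ : ℝ) (hγ0 : 0 < γ) (hγH : γ < H)
    (hcond : 2 * (p : ℝ) * k * (H - γ) > 2 * (k : ℝ) - 1)
    (C : ℝ) (hC : 0 < C) :
    ∃ c : ℝ, 0 < c ∧
      ∀ (Ω : Type) [MeasureSpace Ω], IsProbabilityMeasure (volume : Measure Ω) →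
        ∀ (d : ℕ) (s t : ℝ), 0 ≤ s → s < t → t ≤ 1 →
          ∀ X : ℝ → Ω → EuclideanSpace ℝ (Fin d),
            Measurable (Function.uncurry X) →
            (∀ u ∈ Set.Icc s t, ∀ v ∈ Set.Icc s t,
              (∫⁻ ω, ENNReal.ofReal (‖X v ω - X u ω‖ ^ (2 * p * k))) ≤
                ENNReal.ofReal (C * |v - u| ^ (2 * H * p * k))) →
            (∫⁻ ω, (∫⁻ u in Set.Icc s t, ∫⁻ v in Set.Icc s t,
                ENNReal.ofReal (‖X v ω - X u ω‖ ^ (2 * p) / |v - u| ^ (2 * γ * p + 2))) ^ k)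
              ≤ ENNReal.ofReal (c * (t - s) ^ (2 * (k : ℝ) * p * (H - γ))) :=
  moment_bound_GRR_functional_general H k p hk hp γ hcond C hC
end

section
/- Let H ∈ (0,1/2), let γ satisfy 1/2 − H < γ < 1/2, let t ∈ (0,1], let a, b ≥ 0, and let f : [0,t] → ℝ satisfy |f_u| ≤ a for all u ∈ [0,t] and |f_u − f_v| ≤ b·|u−v|^γ for all u, v ∈ [0,t]. For s ∈ (0,t) define B_s = ∫_s^t ( f_s − (s/v)^{1/2−H} f_v ) / (v−s)^{3/2−H} dv. Then there exists a constant c depending only on H and γ such that |B_s| ≤ c·( b + a·s^{−γ} )·(t−s)^{γ−(1/2−H)} for all s ∈ (0,t), and consequently ∫_0^t B_s² ds ≤ c·( a²·t^{2H} + b²·t^{2(γ+H)} ). -/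
open Real MeasureTheory intervalIntegral

lemma holder_continuousOn {f : ℝ → ℝ} {b γ : ℝ} (hγ : 0 < γ) {S : Set ℝ}
    (h : ∀ u ∈ S, ∀ v ∈ S, |f u - f v| ≤ b * |u - v| ^ γ) : ContinuousOn f S := by
  intro u hu
  rw [ContinuousWithinAt, tendsto_iff_dist_tendsto_zero]
  have hg : Filter.Tendsto (fun v : ℝ => b * |v - u| ^ γ) (nhdsWithin u S) (nhds 0) := by
    have hc : Continuous fun v : ℝ => b * |v - u| ^ γ := by
      apply continuous_const.mul
      exact Continuous.rpow_const (continuous_id.sub continuous_const).abs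
        (fun x => Or.inr hγ.le)
    have h0 : b * |u - u| ^ γ = 0 := by
      simp [Real.zero_rpow hγ.ne']
    have := (hc.tendsto u).mono_left (nhdsWithin_le_nhds (s := S))
    simpa [Real.zero_rpow hγ.ne'] using this
  apply squeeze_zero' (Filter.Eventually.of_forall fun v => dist_nonneg) ?_ hg
  filter_upwards [self_mem_nhdsWithin] with v hv
  rw [Real.dist_eq]
  exact h v hv u hu

lemma core_bound (H γ : ℝ) (hH1 : 0 < H) (hH2 : H < 1 / 2) (hγ1 : 1 / 2 - H < γ)
    (hγ2 : γ < 1 / 2) (t : ℝ) (ht : 0 < t) (a b : ℝ) (ha : 0 ≤ a) (hb : 0 ≤ b)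
    (f : ℝ → ℝ) (hfa : ∀ u ∈ Set.Icc (0 : ℝ) t, |f u| ≤ a)
    (hfb : ∀ u ∈ Set.Icc (0 : ℝ) t, ∀ v ∈ Set.Icc (0 : ℝ) t, |f u - f v| ≤ b * |u - v| ^ γ)
    (s : ℝ) (hs0 : 0 < s) (hst : s < t) :
    |∫ v in s..t, (f s - (s / v) ^ ((1 : ℝ) / 2 - H) * f v) / (v - s) ^ ((3 : ℝ) / 2 - H)|
      ≤ (1 / (γ - (1 / 2 - H))) * (b + a * s ^ (-γ)) * (t - s) ^ (γ - (1 / 2 - H)) := by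
  have hγ0 : 0 < γ := by linarith
  have hδ : 0 < γ - (1 / 2 - H) := by linarith
  set F : ℝ → ℝ := fun v => (f s - (s / v) ^ ((1 : ℝ) / 2 - H) * f v) / (v - s) ^ ((3 : ℝ) / 2 - H)
    with hF
  set g : ℝ → ℝ := fun v => (b + a * s ^ (-γ)) * (v - s) ^ (γ - (3 / 2 - H)) with hg
  have hcoef : 0 ≤ b + a * s ^ (-γ) :=
    add_nonneg hb (mul_nonneg ha (Real.rpow_nonneg hs0.le _))
  -- pointwise bound
  have hpt : ∀ v ∈ Set.Icc s t, |F v| ≤ g v := by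
    intro v hv
    rcases eq_or_lt_of_le hv.1 with heq | hlt
    · have : F v = 0 := by
        simp [hF, ← heq, div_self hs0.ne', Real.one_rpow]
      rw [this, abs_zero]
      exact mul_nonneg hcoef (Real.rpow_nonneg (by rw [← heq, sub_self]) _)
    · have hv0 : 0 < v := hs0.trans hlt
      have hvs : 0 < v - s := sub_pos.2 hlt
      have hsmem : s ∈ Set.Icc (0 : ℝ) t := ⟨hs0.le, (hst.le)⟩
      have hvmem : v ∈ Set.Icc (0 : ℝ) t := ⟨hv0.le, hv.2⟩
      set x : ℝ := (s / v) ^ ((1 : ℝ) / 2 - H) with hx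
      have hx0 : 0 ≤ x := Real.rpow_nonneg (div_nonneg hs0.le hv0.le) _
      have hx1 : x ≤ 1 :=
        Real.rpow_le_one (div_nonneg hs0.le hv0.le) (div_le_one_of_le₀ hlt.le hv0.le)
          (by linarith)
      have hxge : s / v ≤ x := by
        calc s / v = (s / v) ^ (1 : ℝ) := (Real.rpow_one _).symm
        _ ≤ x := Real.rpow_le_rpow_of_exponent_ge (div_pos hs0 hv0)
            (div_le_one_of_le₀ hlt.le hv0.le) (by linarith)
      -- numerator bound
      have hnum : |f s - x * f v| ≤ (b + a * s ^ (-γ)) * (v - s) ^ γ := by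
        have hsplit : f s - x * f v = (f s - f v) + (1 - x) * f v := by ring
        have h1 : |f s - f v| ≤ b * (v - s) ^ γ := by
          have := hfb s hsmem v hvmem
          rwa [abs_sub_comm s v, abs_of_pos hvs] at this
        have h2 : 1 - x ≤ s ^ (-γ) * (v - s) ^ γ := by
          have key : 1 - x ≤ ((v - s) / s) ^ γ := by
            rcases le_or_gt ((v - s) / s) 1 with hy | hy
            · calc 1 - x ≤ 1 - s / v := by linarith
              _ = (v - s) / v := by field_simp
              _ ≤ (v - s) / s := by gcongr
              _ = ((v - s) / s) ^ (1 : ℝ) := (Real.rpow_one _).symm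
              _ ≤ ((v - s) / s) ^ γ := Real.rpow_le_rpow_of_exponent_ge
                  (div_pos hvs hs0) hy (by linarith)
            · calc 1 - x ≤ 1 := by linarith
              _ ≤ ((v - s) / s) ^ γ := Real.one_le_rpow hy.le hγ0.le
          calc 1 - x ≤ ((v - s) / s) ^ γ := key
          _ = (v - s) ^ γ / s ^ γ := Real.div_rpow hvs.le hs0.le γ
          _ = s ^ (-γ) * (v - s) ^ γ := by
              rw [Real.rpow_neg hs0.le]; ring
        have h3 : |f v| ≤ a := hfa v hvmem
        calc |f s - x * f v| ≤ |f s - f v| + |(1 - x) * f v| := by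
              rw [hsplit]; exact abs_add_le _ _
        _ = |f s - f v| + |1 - x| * |f v| := by rw [abs_mul]
        _ = |f s - f v| + (1 - x) * |f v| := by
              rw [abs_of_nonneg (by linarith : (0:ℝ) ≤ 1 - x)]
        _ ≤ b * (v - s) ^ γ + (s ^ (-γ) * (v - s) ^ γ) * a := by
              apply add_le_add h1
              apply mul_le_mul h2 h3 (abs_nonneg _)
              exact mul_nonneg (Real.rpow_nonneg hs0.le _) (Real.rpow_nonneg hvs.le _)
        _ = (b + a * s ^ (-γ)) * (v - s) ^ γ := by ring
      have hden : 0 < (v - s) ^ ((3 : ℝ) / 2 - H) := Real.rpow_pos_of_pos hvs _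
      calc |F v| = |f s - x * f v| / (v - s) ^ ((3 : ℝ) / 2 - H) := by
            rw [hF, abs_div, abs_of_pos hden]
      _ ≤ ((b + a * s ^ (-γ)) * (v - s) ^ γ) / (v - s) ^ ((3 : ℝ) / 2 - H) := by
            gcongr
      _ = g v := by
            rw [hg, mul_div_assoc, ← Real.rpow_sub hvs]
  -- integrability of g
  have hg1 : IntervalIntegrable (fun v : ℝ => (v - s) ^ (γ - (3 / 2 - H))) volume s t := by
    have h0 := (intervalIntegrable_rpow' (a := 0) (b := t - s)
      (show (-1 : ℝ) < γ - (3 / 2 - H) by linarith)).comp_sub_right s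
    rwa [show (0 : ℝ) + s = s by ring, show t - s + s = t by ring] at h0
  have hgint : IntervalIntegrable g volume s t := by
    exact (hg1.const_mul _)
  -- continuity / measurability of F
  have hfc : ContinuousOn f (Set.Icc 0 t) := holder_continuousOn hγ0 hfb
  have hFc : ContinuousOn F (Set.Ioc s t) := by
    apply ContinuousOn.div
    · apply ContinuousOn.sub continuousOn_const
      apply ContinuousOn.mul
      · apply ContinuousOn.rpow_const
        · exact continuousOn_const.div continuousOn_id
            (fun v hv => (hs0.trans hv.1).ne')
        · exact fun v hv => Or.inr (by linarith)
      · exact hfc.mono (fun v hv => ⟨(hs0.trans hv.1).le, hv.2⟩)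
    · apply ContinuousOn.rpow_const (continuousOn_id.sub continuousOn_const)
      exact fun v hv => Or.inr (by linarith)
    · exact fun v hv => (Real.rpow_pos_of_pos (sub_pos.2 hv.1) _).ne'
  have hFint : IntervalIntegrable F volume s t := by
    rw [intervalIntegrable_iff_integrableOn_Ioc_of_le hst.le]
    apply Integrable.mono' ((intervalIntegrable_iff_integrableOn_Ioc_of_le hst.le).1 hgint)
    · exact hFc.aestronglyMeasurable measurableSet_Ioc
    · rw [ae_restrict_iff' measurableSet_Ioc]
      exact Filter.Eventually.of_forall fun v hv => by
        simpa [Real.norm_eq_abs] using hpt v (Set.Ioc_subset_Icc_self hv)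
  -- conclude
  have habs : |∫ v in s..t, F v| ≤ ∫ v in s..t, |F v| :=
    intervalIntegral.abs_integral_le_integral_abs hst.le
  have hmono : (∫ v in s..t, |F v|) ≤ ∫ v in s..t, g v :=
    intervalIntegral.integral_mono_on hst.le hFint.abs hgint hpt
  have hcalc : (∫ v in s..t, g v)
      = (1 / (γ - (1 / 2 - H))) * (b + a * s ^ (-γ)) * (t - s) ^ (γ - (1 / 2 - H)) := by
    rw [hg]
    rw [intervalIntegral.integral_const_mul]
    have h1 : (∫ v in s..t, (v - s) ^ (γ - (3 / 2 - H)))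
        = ∫ v in (0:ℝ)..(t - s), v ^ (γ - (3 / 2 - H)) := by
      have := intervalIntegral.integral_comp_sub_right
        (a := s) (b := t) (fun x => x ^ (γ - (3 / 2 - H))) s
      rwa [sub_self] at this
    rw [h1, integral_rpow (Or.inl (by linarith))]
    rw [Real.zero_rpow (by linarith : γ - (3/2 - H) + 1 ≠ 0)]
    rw [show γ - (3 / 2 - H) + 1 = γ - (1 / 2 - H) by ring]
    ring
  calc |∫ v in s..t, F v| ≤ ∫ v in s..t, |F v| := habs
  _ ≤ ∫ v in s..t, g v := hmono
  _ = _ := hcalc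

set_option maxHeartbeats 1000000 in
/-- Bound on the singular-integral part of the right-sided fractional derivative of order
`1/2 - H` of `u ↦ u^{-(1/2-H)} f_u`, for a bounded `γ`-Hölder function `f` on `[0,t]`:
`|B_s| ≤ c (b + a s^{-γ}) (t-s)^{γ-(1/2-H)}` and `∫_0^t B_s² ds ≤ c (a² t^{2H} + b² t^{2(γ+H)})`,
with `c` depending only on `H` and `γ`. -/
theorem fractional_derivative_singular_part_bound
    (H : ℝ) (hH1 : 0 < H) (hH2 : H < 1 / 2) (γ : ℝ) (hγ1 : 1 / 2 - H < γ) (hγ2 : γ < 1 / 2) :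
    ∃ c : ℝ, 0 < c ∧
      ∀ t : ℝ, 0 < t → t ≤ 1 → ∀ a b : ℝ, 0 ≤ a → 0 ≤ b →
        ∀ f : ℝ → ℝ,
          (∀ u ∈ Set.Icc (0 : ℝ) t, |f u| ≤ a) →
          (∀ u ∈ Set.Icc (0 : ℝ) t, ∀ v ∈ Set.Icc (0 : ℝ) t, |f u - f v| ≤ b * |u - v| ^ γ) →
          (∀ s ∈ Set.Ioo (0 : ℝ) t,
            |∫ v in s..t, (f s - (s / v) ^ ((1 : ℝ) / 2 - H) * f v) / (v - s) ^ ((3 : ℝ) / 2 - H)|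
              ≤ c * (b + a * s ^ (-γ)) * (t - s) ^ (γ - (1 / 2 - H))) ∧
          (∫ s in (0 : ℝ)..t,
              (∫ v in s..t,
                (f s - (s / v) ^ ((1 : ℝ) / 2 - H) * f v) / (v - s) ^ ((3 : ℝ) / 2 - H)) ^ 2)
            ≤ c * (a ^ 2 * t ^ (2 * H) + b ^ 2 * t ^ (2 * (γ + H))) := by
  have hγ0 : 0 < γ := by linarith
  set δ : ℝ := γ - (1 / 2 - H) with hδdef
  have hδ : 0 < δ := by simp only [hδdef]; linarith
  have h2γ : 0 < 1 - 2 * γ := by linarith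
  set c : ℝ := 1 / δ + 2 / (δ ^ 2 * (1 - 2 * γ)) with hcdef
  have hc2 : 0 < 2 / (δ ^ 2 * (1 - 2 * γ)) := by positivity
  have hc1 : 0 < 1 / δ := by positivity
  have hc : 0 < c := by positivity
  refine ⟨c, hc, fun t ht ht1 a b ha hb f hfa hfb => ?_⟩
  set B : ℝ → ℝ := fun s =>
    ∫ v in s..t, (f s - (s / v) ^ ((1 : ℝ) / 2 - H) * f v) / (v - s) ^ ((3 : ℝ) / 2 - H)
    with hB
  have hcore : ∀ s ∈ Set.Ioo (0 : ℝ) t,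
      |B s| ≤ (1 / δ) * (b + a * s ^ (-γ)) * (t - s) ^ δ := fun s hs =>
    core_bound H γ hH1 hH2 hγ1 hγ2 t ht a b ha hb f hfa hfb s hs.1 hs.2
  have hcoef : ∀ s : ℝ, 0 < s → 0 ≤ b + a * s ^ (-γ) := fun s hs =>
    add_nonneg hb (mul_nonneg ha (Real.rpow_nonneg hs.le _))
  constructor
  · intro s hs
    refine (hcore s hs).trans ?_
    have h1 := hcoef s hs.1
    have h2 : (0:ℝ) ≤ (t - s) ^ δ := Real.rpow_nonneg (by linarith [hs.2] : (0:ℝ) ≤ t - s) _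
    have : (1 / δ) ≤ c := by simp only [hcdef]; linarith
    exact mul_le_mul_of_nonneg_right (mul_le_mul_of_nonneg_right this h1) h2
  · by_cases hInt : IntervalIntegrable (fun s => B s ^ 2) volume 0 t
    · set g2 : ℝ → ℝ := fun s => 2 / δ ^ 2 * t ^ (2 * δ) * (b ^ 2 + a ^ 2 * s ^ (-(2 * γ)))
        with hg2
      have hg2int : IntervalIntegrable g2 volume 0 t := by
        apply IntervalIntegrable.const_mul
        exact intervalIntegrable_const.add
          ((intervalIntegrable_rpow' (by linarith : (-1:ℝ) < -(2*γ))).const_mul _)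
      -- ae bound on Icc
      have hmem : ∀ᵐ s ∂(volume.restrict (Set.Icc (0:ℝ) t)), s ∈ Set.Ioo (0:ℝ) t := by
        rw [ae_iff]
        rw [show {s : ℝ | ¬ s ∈ Set.Ioo (0:ℝ) t} = (Set.Ioo (0:ℝ) t)ᶜ from rfl]
        rw [Measure.restrict_apply (measurableSet_Ioo (a := (0:ℝ)) (b := t)).compl]
        refine measure_mono_null (fun x hx => ?_) (?_ : volume ({0, t} : Set ℝ) = 0)
        · obtain ⟨hx1, hx2⟩ := hx
          simp only [Set.mem_compl_iff, Set.mem_setOf_eq, Set.mem_Ioo, not_and_or,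
            not_lt] at hx1
          rcases hx1 with h | h
          · exact Or.inl (le_antisymm h hx2.1)
          · exact Or.inr (le_antisymm hx2.2 h)
        · exact Set.Finite.measure_zero (Set.toFinite _) _
      have hbound : ∀ s ∈ Set.Ioo (0:ℝ) t, B s ^ 2 ≤ g2 s := by
        intro s hs
        have h1 := hcore s hs
        have hts : 0 < t - s := by linarith [hs.2]
        have hX : 0 ≤ b + a * s ^ (-γ) := hcoef s hs.1
        have hh0 : 0 ≤ (1 / δ) * (b + a * s ^ (-γ)) * (t - s) ^ δ := by positivity
        have hsq : B s ^ 2 ≤ ((1 / δ) * (b + a * s ^ (-γ)) * (t - s) ^ δ) ^ 2 := by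
          rw [← sq_abs (B s)]
          exact pow_le_pow_left₀ (abs_nonneg _) h1 2
        refine hsq.trans ?_
        have e1 : ((t - s) ^ δ) ^ 2 = (t - s) ^ (2 * δ) := by
          rw [← Real.rpow_natCast ((t - s) ^ δ) 2, ← Real.rpow_mul hts.le]
          norm_num [mul_comm]
        have e2 : (s ^ (-γ)) ^ 2 = s ^ (-(2 * γ)) := by
          rw [← Real.rpow_natCast (s ^ (-γ)) 2, ← Real.rpow_mul hs.1.le]
          norm_num [mul_comm]
        have hT : (t - s) ^ (2 * δ) ≤ t ^ (2 * δ) :=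
          Real.rpow_le_rpow hts.le (by linarith [hs.1]) (by positivity)
        have hP : (b + a * s ^ (-γ)) ^ 2 ≤ 2 * (b ^ 2 + a ^ 2 * s ^ (-(2 * γ))) := by
          have hy : (a * s ^ (-γ)) ^ 2 = a ^ 2 * s ^ (-(2 * γ)) := by rw [mul_pow, e2]
          nlinarith [sq_nonneg (b - a * s ^ (-γ))]
        calc ((1 / δ) * (b + a * s ^ (-γ)) * (t - s) ^ δ) ^ 2
            = ((1 / δ) ^ 2) * ((b + a * s ^ (-γ)) ^ 2) * ((t - s) ^ δ) ^ 2 := by ring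
        _ ≤ ((1 / δ) ^ 2) * (2 * (b ^ 2 + a ^ 2 * s ^ (-(2 * γ)))) * (t ^ (2 * δ)) := by
            rw [e1]
            have hn1 : (0:ℝ) ≤ (1 : ℝ) / δ ^ 2 := by positivity
            have hn1' : (0:ℝ) ≤ ((1 : ℝ) / δ) ^ 2 := by positivity
            have hn2 : (0:ℝ) ≤ (t - s) ^ (2 * δ) := Real.rpow_nonneg hts.le _
            have hn3 : (0:ℝ) ≤ 2 * (b ^ 2 + a ^ 2 * s ^ (-(2 * γ))) := by
              have := sq_nonneg (a * s ^ (-γ))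
              nlinarith [sq_nonneg b, mul_pow a (s ^ (-γ)) 2, e2]
            exact mul_le_mul (mul_le_mul_of_nonneg_left hP hn1') hT hn2
              (mul_nonneg hn1' hn3)
        _ = g2 s := by
            simp only [hg2]
            have hq : ((1:ℝ) / δ) ^ 2 = 1 / δ ^ 2 := by
              rw [div_pow]; norm_num
            rw [hq]; ring
      have haebound : (fun s => B s ^ 2) ≤ᵐ[volume.restrict (Set.Icc (0:ℝ) t)] g2 := by
        filter_upwards [hmem] with s hs using hbound s hs
      have hle : (∫ s in (0:ℝ)..t, B s ^ 2) ≤ ∫ s in (0:ℝ)..t, g2 s :=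
        intervalIntegral.integral_mono_ae_restrict ht.le hInt hg2int haebound
      refine hle.trans ?_
      -- compute ∫ g2
      have hIrpow : IntervalIntegrable (fun s : ℝ => a ^ 2 * s ^ (-(2*γ))) volume 0 t :=
        (intervalIntegrable_rpow' (by linarith : (-1:ℝ) < -(2*γ))).const_mul _
      have hcalc : (∫ s in (0:ℝ)..t, g2 s)
          = 2 / δ ^ 2 * t ^ (2 * δ) * (b ^ 2 * t + a ^ 2 * (t ^ (1 - 2*γ) / (1 - 2*γ))) := by
        simp only [hg2]
        rw [intervalIntegral.integral_const_mul]
        rw [intervalIntegral.integral_add intervalIntegrable_const hIrpow]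
        rw [intervalIntegral.integral_const, intervalIntegral.integral_const_mul]
        rw [integral_rpow (Or.inl (by linarith : (-1:ℝ) < -(2*γ)))]
        rw [Real.zero_rpow (by linarith : -(2*γ) + 1 ≠ 0)]
        rw [show -(2*γ) + 1 = 1 - 2*γ by ring]
        rw [smul_eq_mul]
        ring
      rw [hcalc]
      -- final algebra
      have et1 : t ^ (2 * δ) * t = t ^ (2 * (γ + H)) := by
        rw [show t ^ (2 * (γ + H)) = t ^ (2 * δ + 1) by rw [hδdef]; ring_nf,
          Real.rpow_add ht, Real.rpow_one]
      have et2 : t ^ (2 * δ) * t ^ (1 - 2*γ) = t ^ (2 * H) := by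
        rw [← Real.rpow_add ht, show 2 * δ + (1 - 2*γ) = 2 * H by rw [hδdef]; ring]
      have hta : (0:ℝ) ≤ t ^ (2 * H) := Real.rpow_nonneg ht.le _
      have htb : (0:ℝ) ≤ t ^ (2 * (γ + H)) := Real.rpow_nonneg ht.le _
      calc 2 / δ ^ 2 * t ^ (2 * δ) * (b ^ 2 * t + a ^ 2 * (t ^ (1 - 2*γ) / (1 - 2*γ)))
          = (2 / δ ^ 2) * (b ^ 2 * t ^ (2 * (γ + H)))
            + (2 / (δ ^ 2 * (1 - 2*γ))) * (a ^ 2 * t ^ (2 * H)) := by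
            rw [← et1, ← et2]; field_simp
      _ ≤ c * (b ^ 2 * t ^ (2 * (γ + H))) + c * (a ^ 2 * t ^ (2 * H)) := by
            have k1 : 2 / δ ^ 2 ≤ c := by
              rw [hcdef]
              have : 2 / δ ^ 2 ≤ 2 / (δ ^ 2 * (1 - 2*γ)) := by
                apply div_le_div_of_nonneg_left (by norm_num) (by positivity)
                nlinarith [sq_nonneg δ]
              linarith
            have k2 : 2 / (δ ^ 2 * (1 - 2*γ)) ≤ c := by rw [hcdef]; linarith
            have n1 : (0:ℝ) ≤ b ^ 2 * t ^ (2 * (γ + H)) := by positivity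
            have n2 : (0:ℝ) ≤ a ^ 2 * t ^ (2 * H) := by positivity
            exact add_le_add (mul_le_mul_of_nonneg_right k1 n1)
              (mul_le_mul_of_nonneg_right k2 n2)
      _ = c * (a ^ 2 * t ^ (2 * H) + b ^ 2 * t ^ (2 * (γ + H))) := by ring
    · rw [intervalIntegral.integral_undef hInt]
      have hta : (0:ℝ) ≤ t ^ (2 * H) := Real.rpow_nonneg ht.le _
      have htb : (0:ℝ) ≤ t ^ (2 * (γ + H)) := Real.rpow_nonneg ht.le _
      positivity
end
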